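/- Let $(z(s),\theta(s))$ be a maximal solution of $z' = \sin\theta$, $\theta' = -\frac{2}{z^2}(\sin\theta + z\cos\theta)$ with $z > 0$, and suppose $z(s) \to 0$ and $\theta(s) \to \theta_*$ as $s \to s_*$. Then either $\theta_* = 0$ and $s_* = +\infty$, or $\theta_* = \pi$ and $s_* = -\infty$ (modulo $2\pi$ in $\theta$). -/

import Mathlib

open Set Filter

/-- `(z, θ)` solves `z' = sin θ`, `θ' = -(2/z²)(sin θ + z cos θ)` with `z > 0` on `D`. -/
def SysSolOn (D : Set ℝ) (z θ : ℝ → ℝ) : Prop :=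
  (∀ s ∈ D, 0 < z s) ∧
  (∀ s ∈ D, HasDerivAt z (Real.sin (θ s)) s) ∧
  (∀ s ∈ D, HasDerivAt θ
    (-(2 / (z s) ^ 2) * (Real.sin (θ s) + z s * Real.cos (θ s))) s)

/-- The open interval of `ℝ` with (possibly infinite) endpoints `s1 s2 : EReal`. -/
def edom (s1 s2 : EReal) : Set ℝ := {s : ℝ | s1 < (s : EReal) ∧ (s : EReal) < s2}

/-- The filter of real numbers approaching the right endpoint `s2 : EReal` from the left
(equal to `atTop` when `s2 = ⊤`). -/
noncomputable def endFilterRight (s2 : EReal) : Filter ℝ :=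
  Filter.comap (fun x : ℝ => (x : EReal)) (nhdsWithin s2 (Iio s2))

/-- The filter of real numbers approaching the left endpoint `s1 : EReal` from the right
(equal to `atBot` when `s1 = ⊥`). -/
noncomputable def endFilterLeft (s1 : EReal) : Filter ℝ :=
  Filter.comap (fun x : ℝ => (x : EReal)) (nhdsWithin s1 (Ioi s1))

/-!
Write `V = sinAddMulCos z θ = sin θ + z cos θ`, so that `θ' = -2V/z²`. At the end of the orbit
`sin θ* ≤ 0`, for otherwise `z` would eventually increase. If `sin θ* < 0`, then
`z' < sin θ* / 2`, which a positive `z` cannot sustain for infinite time; in finite time `s*`,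
`z ≤ s* - s` forces `θ' ≳ (s* - s)⁻²` and `θ` blows up. Near `θ* = π`, `V` is decreasing
wherever it is negative, which contradicts `V → 0`, while `V ≥ 0` again makes `z` increase.
Near `θ* = 0` either `V ≤ -z` eventually, and then `θ + 2 log z` is nondecreasing although it
tends to `-∞`, or the orbit enters `V > -z`, stays there, and `z e^{2s}` is nondecreasing, so `z`
cannot vanish in finite time. The left endpoint reduces to the right one through
`(s, θ) ↦ (-s, θ - π)`.
-/

open Real Topology Pointwise

theorem Convex.monotoneOn_of_hasDerivAt_nonneg {D : Set ℝ} (hD : Convex ℝ D) {f f' : ℝ → ℝ}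
    (hf : ∀ s ∈ D, HasDerivAt f (f' s) s) (hf' : ∀ s ∈ D, 0 ≤ f' s) : MonotoneOn f D :=
  monotoneOn_of_hasDerivWithinAt_nonneg hD
    (fun s hs => (hf s hs).continuousAt.continuousWithinAt)
    (fun s hs => (hf s (interior_subset hs)).hasDerivWithinAt)
    (fun s hs => hf' s (interior_subset hs))

theorem Convex.nonpos_of_hasDerivAt_neg_of_eq_zero {D : Set ℝ} (hD : Convex ℝ D)
    {f f' : ℝ → ℝ} {s₀ : ℝ} (hs₀ : s₀ ∈ D) (hf : ∀ s ∈ D, s₀ ≤ s → HasDerivAt f (f' s) s)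
    (hf₀ : f s₀ ≤ 0) (hbdry : ∀ s ∈ D, s₀ ≤ s → f s = 0 → f' s < 0) :
    ∀ s ∈ D, s₀ ≤ s → f s ≤ 0 := by
  intro s hs hle
  have hIcc : Icc s₀ s ⊆ D := hD.ordConnected.out hs₀ hs
  have hd : ∀ r ∈ Icc s₀ s, HasDerivAt f (f' r) r := fun r hr => hf r (hIcc hr) hr.1
  exact image_le_of_deriv_right_lt_deriv_boundary' (B := fun _ => 0) (B' := fun _ => 0)
    (fun r hr => (hd r hr).continuousAt.continuousWithinAt)
    (fun r hr => (hd r (Ico_subset_Icc_self hr)).hasDerivWithinAt) hf₀ continuousOn_const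
    (fun _ _ => hasDerivWithinAt_const _ _ _)
    (fun r hr => hbdry r (hIcc (Ico_subset_Icc_self hr)) hr.1) ⟨hle, le_rfl⟩

noncomputable def sinAddMulCos (z θ : ℝ) : ℝ := sin θ + z * cos θ

noncomputable def sinAddMulCosDeriv (z θ : ℝ) : ℝ :=
  sinAddMulCos z θ * (cos θ - 2 * (cos θ - z * sin θ) / z ^ 2) - z * cos θ ^ 2

theorem sinAddMulCosDeriv_neg {z θ : ℝ} (hz : 0 < z) (hz' : z < 1 / 4) (hcos : cos θ < -1 / 2)
    (hV : sinAddMulCos z θ < 0) : sinAddMulCosDeriv z θ < 0 := by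
  have hk : 0 ≤ cos θ - 2 * (cos θ - z * sin θ) / z ^ 2 := by
    rw [sub_nonneg, div_le_iff₀ (by positivity)]
    nlinarith [neg_one_le_sin θ, neg_one_le_cos θ]
  unfold sinAddMulCosDeriv
  nlinarith [mul_nonpos_of_nonpos_of_nonneg hV.le hk, mul_pos hz (by nlinarith : 0 < cos θ ^ 2)]

theorem sinAddMulCosDeriv_add_sin_pos {z θ : ℝ} (hz : 0 < z) (hcos : 0 < cos θ)
    (hV : sinAddMulCos z θ = -z) : 0 < sinAddMulCosDeriv z θ + sin θ := by
  have hsin : sin θ = -z * (1 + cos θ) := by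
    unfold sinAddMulCos at hV
    linarith
  have key : sinAddMulCosDeriv z θ + sin θ = 2 * cos θ / z + z * (1 - cos θ ^ 2) := by
    unfold sinAddMulCosDeriv
    rw [hV, hsin]
    field_simp
    ring
  rw [key]
  have : 0 < 2 * cos θ / z := by positivity
  nlinarith [cos_sq_le_one θ]

theorem SysSolOn.hasDerivAt_sinAddMulCos {D : Set ℝ} {z θ : ℝ → ℝ} (h : SysSolOn D z θ)
    {s : ℝ} (hs : s ∈ D) :
    HasDerivAt (fun t => sinAddMulCos (z t) (θ t)) (sinAddMulCosDeriv (z s) (θ s)) s := by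
  obtain ⟨hpos, hz, hθ⟩ := h
  have hzs := (hpos s hs).ne'
  refine ((hθ s hs).sin.add ((hz s hs).mul (hθ s hs).cos)).congr_deriv ?_
  simp only [sinAddMulCosDeriv, sinAddMulCos]
  field_simp
  ring

theorem SysSolOn.reflect {D : Set ℝ} {z θ : ℝ → ℝ} (h : SysSolOn D z θ) :
    SysSolOn (-D) (fun s => z (-s)) (fun s => θ (-s) - π) := by
  obtain ⟨hpos, hz, hθ⟩ := h
  refine ⟨fun s hs => hpos _ hs, fun s hs => ?_, fun s hs => ?_⟩
  · refine ((hz _ hs).comp s (hasDerivAt_neg s)).congr_deriv ?_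
    rw [sin_sub_pi]
    ring
  · refine (((hθ _ hs).comp s (hasDerivAt_neg s)).sub_const π).congr_deriv ?_
    rw [sin_sub_pi, cos_sub_pi]
    ring

theorem neg_edom (s1 s2 : EReal) : -edom s1 s2 = edom (-s2) (-s1) := by
  ext s
  simp only [edom, Set.mem_neg, Set.mem_ofPred_eq, EReal.coe_neg]
  rw [EReal.lt_neg_comm, EReal.neg_lt_comm, and_comm]

theorem convex_edom (s1 s2 : EReal) : Convex ℝ (edom s1 s2) :=
  OrdConnected.convex ⟨fun _ hx _ hy _ ht =>
    ⟨hx.1.trans_le (EReal.coe_le_coe_iff.2 ht.1), (EReal.coe_le_coe_iff.2 ht.2).trans_lt hy.2⟩⟩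

theorem endFilterRight_hasBasis {s1 s2 : EReal} (hlt : s1 < s2) :
    (endFilterRight s2).HasBasis (· ∈ edom s1 s2) (fun s₀ => edom s1 s2 ∩ Ici s₀) := by
  refine ((nhdsLT_basis_of_exists_lt ⟨s1, hlt⟩).comap _).to_hasBasis (fun b hb => ?_)
    (fun s₀ hs₀ => ⟨s₀, hs₀.2, ?_⟩)
  · obtain ⟨x, hx, hx2⟩ := EReal.lt_iff_exists_real_btwn.1 (max_lt hb hlt)
    refine ⟨x, ⟨(le_max_right _ _).trans_lt hx, hx2⟩, fun s hs => ⟨?_, hs.1.2⟩⟩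
    exact ((le_max_left _ _).trans_lt hx).trans_le (EReal.coe_le_coe_iff.2 hs.2)
  · rintro s ⟨hs₀s, hs2⟩
    exact ⟨⟨hs₀.1.trans hs₀s, hs2⟩, (EReal.coe_lt_coe_iff.1 hs₀s).le⟩

theorem endFilterRight_top : endFilterRight ⊤ = atTop := by
  have : Iio (⊤ : EReal) = {⊤}ᶜ := by
    ext x
    simp [lt_top_iff_ne_top]
  rw [endFilterRight, this, EReal.nhdsWithin_top, comap_map (fun _ _ => EReal.coe_eq_coe_iff.1)]

theorem endFilterRight_coe (B : ℝ) : endFilterRight B = 𝓝[<] B := by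
  rw [endFilterRight, nhdsWithin, nhdsWithin, comap_inf, EReal.nhds_coe,
    comap_map (fun _ _ => EReal.coe_eq_coe_iff.1), comap_principal]
  congr 2
  ext x
  simp

theorem endFilterLeft_eq_map_neg (s1 : EReal) :
    endFilterLeft s1 = map Neg.neg (endFilterRight (-s1)) := by
  have hcomm : ((↑) : ℝ → EReal) ∘ Neg.neg = Neg.neg ∘ (↑) := funext EReal.coe_neg
  have hnhds : comap Neg.neg (𝓝[<] (-s1)) = 𝓝[>] s1 := by
    rw [nhdsWithin, nhdsWithin, comap_inf, comap_principal,
      show (Neg.neg : EReal → EReal) = Homeomorph.neg EReal from rfl, Homeomorph.comap_nhds_eq]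
    congr 2
    · simp
    · ext x
      simp [EReal.neg_lt_neg_iff]
  rw [endFilterRight, endFilterLeft, map_eq_comap_of_inverse (funext neg_neg) (funext neg_neg),
    comap_comap, hcomm, ← comap_comap, hnhds]

structure ApproachesBoundary (F : Filter ℝ) (D : Set ℝ) (z θ : ℝ → ℝ) (θstar : ℝ) : Prop where
  convex : Convex ℝ D
  hasBasis : F.HasBasis (· ∈ D) (fun s₀ => D ∩ Ici s₀)
  sol : SysSolOn D z θ
  tendsto_z : Tendsto z F (𝓝 0)
  tendsto_θ : Tendsto θ F (𝓝 θstar)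

namespace ApproachesBoundary

variable {F : Filter ℝ} {D : Set ℝ} {z θ : ℝ → ℝ} {θstar : ℝ}

theorem neBot (h : ApproachesBoundary F D z θ θstar) : F.NeBot :=
  h.hasBasis.neBot_iff.2 fun hs => ⟨_, hs, self_mem_Ici⟩

theorem eventually_ge (h : ApproachesBoundary F D z θ θstar) {s₀ : ℝ} (hs₀ : s₀ ∈ D) :
    ∀ᶠ s in F, s ∈ D ∧ s₀ ≤ s :=
  h.hasBasis.mem_of_mem hs₀

theorem exists_forall_ge (h : ApproachesBoundary F D z θ θstar) {P : ℝ → Prop}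
    (hP : ∀ᶠ s in F, P s) : ∃ s₀ ∈ D, ∀ s ∈ D, s₀ ≤ s → P s :=
  let ⟨s₀, hs₀, hsub⟩ := h.hasBasis.eventually_iff.1 hP
  ⟨s₀, hs₀, fun _ hs hle => hsub ⟨hs, hle⟩⟩

theorem tendsto_z_nhdsGT (h : ApproachesBoundary F D z θ θstar) : Tendsto z F (𝓝[>] 0) := by
  obtain ⟨s₀, hs₀⟩ := h.hasBasis.ex_mem
  refine tendsto_nhdsWithin_iff.2 ⟨h.tendsto_z, ?_⟩
  filter_upwards [h.eventually_ge hs₀] with s hs using h.sol.1 s hs.1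

theorem tendsto_sinAddMulCos (h : ApproachesBoundary F D z θ θstar) :
    Tendsto (fun s => sinAddMulCos (z s) (θ s)) F (𝓝 (sin θstar)) := by
  simpa [sinAddMulCos] using ((continuous_sin.tendsto _).comp h.tendsto_θ).add
    (h.tendsto_z.mul ((continuous_cos.tendsto _).comp h.tendsto_θ))

theorem eventually_le_of_deriv_nonneg (h : ApproachesBoundary F D z θ θstar) {f f' : ℝ → ℝ}
    {s₀ : ℝ} (hs₀ : s₀ ∈ D) (hf : ∀ s ∈ D, s₀ ≤ s → HasDerivAt f (f' s) s)
    (hf' : ∀ s ∈ D, s₀ ≤ s → 0 ≤ f' s) : ∀ᶠ s in F, f s₀ ≤ f s := by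
  have hmono : MonotoneOn f (D ∩ Ici s₀) :=
    (h.convex.inter (convex_Ici s₀)).monotoneOn_of_hasDerivAt_nonneg
      (fun s hs => hf s hs.1 hs.2) (fun s hs => hf' s hs.1 hs.2)
  filter_upwards [h.eventually_ge hs₀] with s hs
  exact hmono ⟨hs₀, self_mem_Ici⟩ hs hs.2

theorem le_of_deriv_nonneg (h : ApproachesBoundary F D z θ θstar) {f f' : ℝ → ℝ} {s₀ L : ℝ}
    (hs₀ : s₀ ∈ D) (hf : ∀ s ∈ D, s₀ ≤ s → HasDerivAt f (f' s) s)
    (hf' : ∀ s ∈ D, s₀ ≤ s → 0 ≤ f' s) (hfL : Tendsto f F (𝓝 L)) : f s₀ ≤ L :=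
  haveI := h.neBot
  ge_of_tendsto hfL (h.eventually_le_of_deriv_nonneg hs₀ hf hf')

theorem not_tendsto_atBot_of_deriv_nonneg (h : ApproachesBoundary F D z θ θstar)
    {f f' : ℝ → ℝ} {s₀ : ℝ} (hs₀ : s₀ ∈ D) (hf : ∀ s ∈ D, s₀ ≤ s → HasDerivAt f (f' s) s)
    (hf' : ∀ s ∈ D, s₀ ≤ s → 0 ≤ f' s) : ¬ Tendsto f F atBot := fun hbot =>
  haveI := h.neBot
  let ⟨_, hle, hlt⟩ :=
    ((h.eventually_le_of_deriv_nonneg hs₀ hf hf').and (hbot.eventually_lt_atBot (f s₀))).exists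
  hle.not_gt hlt

theorem not_eventually_sin_nonneg (h : ApproachesBoundary F D z θ θstar) :
    ¬ ∀ᶠ s in F, 0 ≤ sin (θ s) := fun hev => by
  obtain ⟨s₀, hs₀, hsin⟩ := h.exists_forall_ge hev
  exact (h.sol.1 s₀ hs₀).not_ge
    (h.le_of_deriv_nonneg hs₀ (fun s hs _ => h.sol.2.1 s hs) hsin h.tendsto_z)

theorem sin_nonpos (h : ApproachesBoundary F D z θ θstar) : sin θstar ≤ 0 :=
  le_of_not_gt fun hpos => h.not_eventually_sin_nonneg <|
    (((continuous_sin.tendsto _).comp h.tendsto_θ).eventually_const_lt hpos).mono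
      fun _ => le_of_lt

theorem not_eventually_sinAddMulCos_le_neg (h : ApproachesBoundary F D z θ θstar) :
    ¬ ∀ᶠ s in F, sinAddMulCos (z s) (θ s) ≤ -z s := fun hev => by
  obtain ⟨hpos, hz, hθ⟩ := h.sol
  obtain ⟨s₀, hs₀, hV⟩ := h.exists_forall_ge hev
  refine h.not_tendsto_atBot_of_deriv_nonneg hs₀ (f := fun s => θ s + 2 * log (z s))
    (fun s hs _ => (hθ s hs).add (((hz s hs).log (hpos s hs).ne').const_mul 2))
    (fun s hs hle => ?_)
    (h.tendsto_θ.add_atBot ((tendsto_log_nhdsGT_zero.comp h.tendsto_z_nhdsGT).const_mul_atBot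
      two_pos))
  have hzs := hpos s hs
  have hVs := hV s hs hle
  rw [show -(2 / z s ^ 2) * (sin (θ s) + z s * cos (θ s)) + 2 * (sin (θ s) / z s)
      = (-2 * sinAddMulCos (z s) (θ s) + 2 * z s * sin (θ s)) / z s ^ 2 by
    unfold sinAddMulCos; field_simp]
  exact div_nonneg (by nlinarith [neg_one_le_sin (θ s)]) (sq_nonneg _)

theorem cos_ne_neg_one (h : ApproachesBoundary F D z θ θstar) : cos θstar ≠ -1 := fun hcos => by
  have hsin : sin θstar = 0 := by nlinarith [sin_sq_add_cos_sq θstar]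
  obtain ⟨s₀, hs₀, hP⟩ : ∃ s₀ ∈ D, ∀ s ∈ D, s₀ ≤ s → z s < 1 / 4 ∧ cos (θ s) < -1 / 2 :=
    h.exists_forall_ge ((h.tendsto_z.eventually_lt_const (by norm_num)).and
      (((continuous_cos.tendsto _).comp h.tendsto_θ).eventually_lt_const
        (by linarith : cos θstar < -1 / 2)))
  obtain ⟨s₁, hs₁, h01, hV₁⟩ : ∃ s₁ ∈ D, s₀ ≤ s₁ ∧ sinAddMulCos (z s₁) (θ s₁) < 0 := by
    by_contra! hV
    refine h.not_eventually_sin_nonneg ?_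
    filter_upwards [h.eventually_ge hs₀] with s ⟨hs, hle⟩
    have := hV s hs hle
    unfold sinAddMulCos at this
    nlinarith [h.sol.1 s hs, (hP s hs hle).2]
  have hstay := h.convex.nonpos_of_hasDerivAt_neg_of_eq_zero hs₁
    (fun s hs _ => (h.sol.hasDerivAt_sinAddMulCos hs).sub_const (sinAddMulCos (z s₁) (θ s₁)))
    (sub_self _).le fun s hs hle heq => by
      obtain ⟨hzs, hcs⟩ := hP s hs (h01.trans hle)
      exact sinAddMulCosDeriv_neg (h.sol.1 s hs) hzs hcs (sub_eq_zero.1 heq ▸ hV₁)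
  have := h.neBot
  linarith [le_of_tendsto h.tendsto_sinAddMulCos
    ((h.eventually_ge hs₁).mono fun s hs => sub_nonpos.1 (hstay s hs.1 hs.2))]

theorem not_forall_neg_two_mul_le_sin (h : ApproachesBoundary F D z θ θstar) {B : ℝ}
    (hB : F ≤ 𝓝 B) {s₀ : ℝ} (hs₀ : s₀ ∈ D) : ¬ ∀ s ∈ D, s₀ ≤ s → -(2 * z s) ≤ sin (θ s) :=
  fun hsin => by
    have hmono := h.le_of_deriv_nonneg hs₀ (f := fun s => z s * exp (2 * s))
      (fun s hs _ => (h.sol.2.1 s hs).mul ((hasDerivAt_id s).const_mul 2).exp)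
      (fun s hs hle => by
        simp only [id, mul_one]
        nlinarith [mul_le_mul_of_nonneg_right (hsin s hs hle) (exp_pos (2 * s)).le])
      (h.tendsto_z.mul (((continuous_exp.comp (continuous_const_mul 2)).tendsto B).mono_left hB))
    rw [zero_mul] at hmono
    exact (mul_pos (h.sol.1 s₀ hs₀) (exp_pos _)).not_ge hmono

theorem cos_ne_one_of_le_nhds (h : ApproachesBoundary F D z θ θstar) {B : ℝ} (hB : F ≤ 𝓝 B) :
    cos θstar ≠ 1 := fun hcos => by
  obtain ⟨hpos, hz, hθ⟩ := h.sol
  obtain ⟨s₀, hs₀, hcos₀⟩ : ∃ s₀ ∈ D, ∀ s ∈ D, s₀ ≤ s → 0 < cos (θ s) := h.exists_forall_ge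
    (((continuous_cos.tendsto _).comp h.tendsto_θ).eventually_const_lt
      (hcos ▸ one_pos : (0 : ℝ) < cos θstar))
  by_cases hbelow : ∀ s ∈ D, s₀ ≤ s → sinAddMulCos (z s) (θ s) ≤ -z s
  · exact h.not_eventually_sinAddMulCos_le_neg
      ((h.eventually_ge hs₀).mono fun s hs => hbelow s hs.1 hs.2)
  push Not at hbelow
  obtain ⟨s₁, hs₁, h01, hV₁⟩ := hbelow
  have habove := h.convex.nonpos_of_hasDerivAt_neg_of_eq_zero hs₁
    (f := fun s => -(sinAddMulCos (z s) (θ s) + z s))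
    (fun s hs _ => ((h.sol.hasDerivAt_sinAddMulCos hs).add (hz s hs)).neg) (by linarith)
    fun s hs hle heq => neg_lt_zero.2 <| sinAddMulCosDeriv_add_sin_pos (hpos s hs)
      (hcos₀ s hs (h01.trans hle)) (by linarith)
  refine h.not_forall_neg_two_mul_le_sin hB hs₁ fun s hs hle => ?_
  have hV := habove s hs hle
  unfold sinAddMulCos at hV
  nlinarith [cos_le_one (θ s), hpos s hs]

theorem sin_nonneg_of_le_atTop (h : ApproachesBoundary F D z θ θstar) (hF : F ≤ atTop) :
    0 ≤ sin θstar := by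
  by_contra! hσ
  obtain ⟨s₀, hs₀, hP⟩ : ∃ s₀ ∈ D, ∀ s ∈ D, s₀ ≤ s → sin (θ s) < sin θstar / 2 :=
    h.exists_forall_ge (((continuous_sin.tendsto _).comp h.tendsto_θ).eventually_lt_const
      (by linarith))
  refine h.not_tendsto_atBot_of_deriv_nonneg hs₀ (f := fun s => sin θstar / 2 * s - z s)
    (fun s hs _ => ((hasDerivAt_id' s).const_mul _).sub (h.sol.2.1 s hs))
    (fun s hs hle => by linarith [hP s hs hle]) ?_
  simpa only [sub_eq_add_neg, id] using
    ((tendsto_id.mono_left hF).const_mul_atTop_of_neg (by linarith)).atBot_add h.tendsto_z.neg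

theorem le_sub_of_le_nhds (h : ApproachesBoundary F D z θ θstar) {B : ℝ} (hB : F ≤ 𝓝 B) :
    ∀ s ∈ D, z s ≤ B - s := fun s hs => by
  have := h.le_of_deriv_nonneg hs (f := fun t => z t + t)
    (fun t ht _ => (h.sol.2.1 t ht).add (hasDerivAt_id t))
    (fun t _ _ => by linarith [neg_one_le_sin (θ t)])
    (h.tendsto_z.add (tendsto_id.mono_left hB))
  linarith

theorem sin_nonneg_of_le_nhdsLT (h : ApproachesBoundary F D z θ θstar) {B : ℝ}
    (hB : F ≤ 𝓝[<] B) : 0 ≤ sin θstar := by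
  by_contra! hσ
  obtain ⟨hpos, hz, hθ⟩ := h.sol
  have hzB := h.le_sub_of_le_nhds (hB.trans nhdsWithin_le_nhds)
  obtain ⟨s₀, hs₀, hP⟩ : ∃ s₀ ∈ D, ∀ s ∈ D, s₀ ≤ s →
      sin (θ s) < sin θstar / 2 ∧ z s < -sin θstar / 4 :=
    h.exists_forall_ge ((((continuous_sin.tendsto _).comp h.tendsto_θ).eventually_lt_const
      (by linarith)).and (h.tendsto_z.eventually_lt_const (by linarith)))
  have hBs : Tendsto (fun s => B - s) F (𝓝[>] 0) := by
    refine tendsto_nhdsWithin_iff.2 ⟨?_, ?_⟩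
    · exact ((continuous_const.sub continuous_id).tendsto' B 0 (sub_self B)).mono_left
        (hB.trans nhdsWithin_le_nhds)
    · exact (eventually_mem_nhdsWithin.filter_mono hB).mono fun _ hs => mem_Ioi.2 (sub_pos.2 hs)
  refine h.not_tendsto_atBot_of_deriv_nonneg hs₀
    (f := fun s => θ s + sin θstar / 2 * (B - s)⁻¹)
    (fun s hs _ => (hθ s hs).add ((((hasDerivAt_id' s).const_sub B).inv
      (by linarith [hpos s hs, hzB s hs])).const_mul _))
    (fun s hs hle => ?_)
    (h.tendsto_θ.add_atBot ((tendsto_inv_nhdsGT_zero.comp hBs).const_mul_atTop_of_neg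
      (by linarith)))
  obtain ⟨hsin, hzs⟩ := hP s hs hle
  have hz0 := hpos s hs
  have hθ' : -sin θstar / 2 / z s ^ 2 ≤ -(2 / z s ^ 2) * (sin (θ s) + z s * cos (θ s)) := by
    rw [show -(2 / z s ^ 2) * (sin (θ s) + z s * cos (θ s))
      = -2 * (sin (θ s) + z s * cos (θ s)) / z s ^ 2 by ring]
    exact div_le_div_of_nonneg_right (by nlinarith [cos_le_one (θ s)]) (by positivity)
  have hzB' : -sin θstar / 2 / (B - s) ^ 2 ≤ -sin θstar / 2 / z s ^ 2 :=
    div_le_div_of_nonneg_left (by linarith) (by positivity)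
      (pow_le_pow_left₀ hz0.le (hzB s hs) 2)
  have : sin θstar / 2 * (-(-1) / (B - s) ^ 2) = -(-sin θstar / 2 / (B - s) ^ 2) := by ring
  linarith

end ApproachesBoundary

theorem eq_top_and_cos_eq_one_of_tendsto_endFilterRight {s1 s2 : EReal} (hlt : s1 < s2)
    {z θ : ℝ → ℝ} {θstar : ℝ} (hsol : SysSolOn (edom s1 s2) z θ)
    (hz : Tendsto z (endFilterRight s2) (𝓝 0)) (hθ : Tendsto θ (endFilterRight s2) (𝓝 θstar)) :
    s2 = ⊤ ∧ ∃ k : ℤ, θstar = 2 * (k : ℝ) * π := by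
  have h : ApproachesBoundary (endFilterRight s2) (edom s1 s2) z θ θstar :=
    ⟨convex_edom s1 s2, endFilterRight_hasBasis hlt, hsol, hz, hθ⟩
  have hcos : 0 ≤ sin θstar → cos θstar = 1 := fun hsin =>
    (sin_eq_zero_iff_cos_eq.1 (le_antisymm h.sin_nonpos hsin)).resolve_right h.cos_ne_neg_one
  induction s2 using EReal.rec with
  | bot => exact absurd hlt not_lt_bot
  | coe B =>
    have hB := (endFilterRight_coe B).le
    exact absurd (hcos (h.sin_nonneg_of_le_nhdsLT hB))
      (h.cos_ne_one_of_le_nhds (hB.trans nhdsWithin_le_nhds))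
  | top =>
    obtain ⟨k, hk⟩ := (cos_eq_one_iff θstar).1
      (hcos (h.sin_nonneg_of_le_atTop endFilterRight_top.le))
    exact ⟨rfl, k, by rw [← hk]; ring⟩

theorem stmt12_general (s1 s2 : EReal) (hlt : s1 < s2) (z θ : ℝ → ℝ)
    (hsol : SysSolOn (edom s1 s2) z θ)
    (θstar : ℝ) :
    (Tendsto z (endFilterRight s2) (nhds 0) →
      Tendsto θ (endFilterRight s2) (nhds θstar) →
      s2 = ⊤ ∧ ∃ k : ℤ, θstar = 2 * (k : ℝ) * Real.pi) ∧
    (Tendsto z (endFilterLeft s1) (nhds 0) →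
      Tendsto θ (endFilterLeft s1) (nhds θstar) →
      s1 = ⊥ ∧ ∃ k : ℤ, θstar = Real.pi + 2 * (k : ℝ) * Real.pi) := by
  refine ⟨eq_top_and_cos_eq_one_of_tendsto_endFilterRight hlt hsol, fun hz hθ => ?_⟩
  rw [endFilterLeft_eq_map_neg, tendsto_map'_iff] at hz hθ
  obtain ⟨htop, k, hk⟩ := eq_top_and_cos_eq_one_of_tendsto_endFilterRight
    (EReal.neg_lt_neg_iff.2 hlt) (neg_edom s1 s2 ▸ hsol.reflect) hz (hθ.sub_const π)
  exact ⟨EReal.neg_eq_top_iff.1 htop, k, by linarith⟩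

/-- If a maximal orbit of the phase plane converges to the boundary `z = 0` as `s → s_*` with
`θ → θ_*`, then either `θ_* = 0 (mod 2π)` and `s_* = +∞`, or `θ_* = π (mod 2π)` and
`s_* = -∞`. -/
theorem stmt12 (s1 s2 : EReal) (hlt : s1 < s2) (z θ : ℝ → ℝ)
    (hsol : SysSolOn (edom s1 s2) z θ)
    (hmax : ∀ t1 t2 : EReal, ∀ w φ : ℝ → ℝ, SysSolOn (edom t1 t2) w φ →
      edom s1 s2 ⊆ edom t1 t2 → Set.EqOn w z (edom s1 s2) → Set.EqOn φ θ (edom s1 s2) →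
      edom t1 t2 = edom s1 s2)
    (θstar : ℝ) :
    (Tendsto z (endFilterRight s2) (nhds 0) →
      Tendsto θ (endFilterRight s2) (nhds θstar) →
      s2 = ⊤ ∧ ∃ k : ℤ, θstar = 2 * (k : ℝ) * Real.pi) ∧
    (Tendsto z (endFilterLeft s1) (nhds 0) →
      Tendsto θ (endFilterLeft s1) (nhds θstar) →
      s1 = ⊥ ∧ ∃ k : ℤ, θstar = Real.pi + 2 * (k : ℝ) * Real.pi) :=
  stmt12_general s1 s2 hlt z θ hsol θstar
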